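/- The three-dimensional space E₂ = span{1, x, x³} of functions on [−1,1] has no non-negative Bernstein basis: any function p ∈ E₂ that vanishes at −1 and at 1 and is not identically zero is of the form p(x) = b(x − x³) with b ≠ 0, and hence takes both strictly positive and strictly negative values on (−1,1). -/
import Mathlib


open Set Filter Topology

noncomputable section

/-- `p k`, `k = 0, …, n`, is a Bernstein basis of the `(n+1)`-dimensional subspace `U` of
`C^n([a,b], ℝ)`: it is a basis of `U` and each `p k` has a zero of order `k` at `a`
(derivatives of order `< k` vanish at `a`, the `k`-th does not) and a zero of order
`n - k` at `b`. -/
def IsBernsteinBasisOf (a b : ℝ) (n : ℕ) (U : Submodule ℝ (ℝ → ℝ))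
    (p : Fin (n + 1) → ℝ → ℝ) : Prop :=
  (∀ k, p k ∈ U) ∧ LinearIndependent ℝ p ∧ Submodule.span ℝ (Set.range p) = U ∧
  ∀ k : Fin (n + 1),
    (∀ j : ℕ, j < (k : ℕ) → iteratedDeriv j (p k) a = 0) ∧
    iteratedDeriv (k : ℕ) (p k) a ≠ 0 ∧
    (∀ j : ℕ, j < n - (k : ℕ) → iteratedDeriv j (p k) b = 0) ∧
    iteratedDeriv (n - (k : ℕ)) (p k) b ≠ 0


/-- The space `E₂ = span{1, x, x³}`. -/
def E₂ : Submodule ℝ (ℝ → ℝ) :=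
  Submodule.span ℝ {(fun _ => (1 : ℝ)), (fun x => x), (fun x => x ^ 3)}

/-- On `[-1,1]`, `E₂ = span{1, x, x³}` has no non-negative Bernstein basis: every nonzero
member of `E₂` vanishing at `-1` and at `1` equals `b (x - x³)` for some `b ≠ 0` and hence
takes both strictly positive and strictly negative values on `(-1,1)`. -/
theorem e2_no_nonneg_bernstein_basis :
    (∀ g ∈ E₂, g ≠ 0 → g (-1) = 0 → g 1 = 0 →
      ∃ b : ℝ, b ≠ 0 ∧ g = fun x => b * (x - x ^ 3)) ∧
    (∀ g ∈ E₂, g ≠ 0 → g (-1) = 0 → g 1 = 0 →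
      (∃ x ∈ Set.Ioo (-1 : ℝ) 1, 0 < g x) ∧ (∃ y ∈ Set.Ioo (-1 : ℝ) 1, g y < 0)) ∧
    ¬ ∃ p : Fin 3 → ℝ → ℝ, IsBernsteinBasisOf (-1) 1 2 E₂ p ∧
        ∀ k, ∀ x ∈ Set.Icc (-1 : ℝ) 1, 0 ≤ p k x := by
  have key : ∀ g ∈ E₂, g ≠ 0 → g (-1) = 0 → g 1 = 0 →
      ∃ b : ℝ, b ≠ 0 ∧ g = fun x => b * (x - x ^ 3) := by
    intro g hg hne h1 h2
    rw [E₂, show ({(fun _ => (1 : ℝ)), (fun x => x), (fun x => x ^ 3)} : Set (ℝ → ℝ)) =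
      insert (fun _ => (1:ℝ)) (insert (fun x => x) {fun x => x ^ 3}) from rfl,
      Submodule.mem_span_insert] at hg
    obtain ⟨a, z, hz, rfl⟩ := hg
    rw [Submodule.mem_span_insert] at hz
    obtain ⟨b, w, hw, rfl⟩ := hz
    rw [Submodule.mem_span_singleton] at hw
    obtain ⟨c, rfl⟩ := hw
    simp only [Pi.add_apply, Pi.smul_apply, smul_eq_mul] at h1 h2
    have ha : a = 0 := by nlinarith
    have hc : c = -b := by nlinarith
    refine ⟨b, ?_, ?_⟩
    · rintro rfl
      apply hne
      funext x
      simp [ha, hc]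
    · funext x
      simp only [Pi.add_apply, Pi.smul_apply, smul_eq_mul, ha, hc]
      ring
  have key2 : ∀ g ∈ E₂, g ≠ 0 → g (-1) = 0 → g 1 = 0 →
      (∃ x ∈ Set.Ioo (-1 : ℝ) 1, 0 < g x) ∧ (∃ y ∈ Set.Ioo (-1 : ℝ) 1, g y < 0) := by
    intro g hg hne h1 h2
    obtain ⟨b, hb, rfl⟩ := key g hg hne h1 h2
    have hmem : (1/2 : ℝ) ∈ Set.Ioo (-1 : ℝ) 1 := by norm_num
    have hmem' : (-1/2 : ℝ) ∈ Set.Ioo (-1 : ℝ) 1 := by norm_num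
    rcases lt_or_gt_of_ne hb with hb' | hb'
    · exact ⟨⟨-1/2, hmem', by nlinarith⟩, ⟨1/2, hmem, by nlinarith⟩⟩
    · exact ⟨⟨1/2, hmem, by nlinarith⟩, ⟨-1/2, hmem', by nlinarith⟩⟩
  refine ⟨key, key2, ?_⟩
  rintro ⟨p, ⟨hmem, hli, _, hk⟩, hnn⟩
  have h1 := hk 1
  have hpa : p 1 (-1) = 0 := by
    have := h1.1 0 (by norm_num)
    rwa [iteratedDeriv_zero] at this
  have hpb : p 1 1 = 0 := by
    have := h1.2.2.1 0 (by norm_num)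
    rwa [iteratedDeriv_zero] at this
  have hne : p 1 ≠ 0 := hli.ne_zero 1
  obtain ⟨_, ⟨y, hy, hyneg⟩⟩ := key2 (p 1) (hmem 1) hne hpa hpb
  exact absurd (hnn 1 y ⟨hy.1.le, hy.2.le⟩) (not_le.mpr hyneg)
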